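/- arXiv:2602.09950 — 9 statements merged into one kernel-verified Lean document; each statement's English description precedes it below -/
import Mathlib

section
/- Let U be the Snell envelope of an adapted square-integrable process Z defined by the backward recursion U_N = Z_N, U_n = max(Z_n, E[U_{n+1}|F_n]), and let τ* = inf{n ∈ {0,...,N} : U_n = Z_n}. Then τ* is a stopping time taking values in {0,...,N} and the stopped process (U_{n ∧ τ*})_{0≤n≤N} is a martingale. -/
open MeasureTheory

/-- The first hitting time of the Snell envelope on the payoff is a stopping time
bounded by `N`, and the stopped Snell envelope is a martingale. -/
theorem snell_hitting_time_is_stopping_time_and_stopped_snell_is_martingale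
    {Ω : Type*} {m0 : MeasurableSpace Ω} {μ : Measure Ω} [IsProbabilityMeasure μ]
    (ℱ : Filtration ℕ m0) (N : ℕ) (Z U : ℕ → Ω → ℝ)
    (hZadapted : Adapted ℱ Z) (hZ2 : ∀ n, MemLp (Z n) 2 μ)
    (hUN : ∀ ω, U N ω = Z N ω)
    (hUrec : ∀ n < N, ∀ ω, U n ω = max (Z n ω) ((μ[U (n + 1) | ℱ n]) ω))
    (τ : Ω → ℕ) (hτ : ∀ ω, τ ω = sInf {n | U n ω = Z n ω}) :
    IsStoppingTime ℱ (fun ω => (τ ω : WithTop ℕ)) ∧ (∀ ω, τ ω ≤ N) ∧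
      Martingale (MeasureTheory.stoppedProcess U (fun ω => (τ ω : WithTop ℕ))) ℱ μ := by
  -- τ is bounded by N
  have hτN : ∀ ω, τ ω ≤ N := fun ω => by
    rw [hτ ω]; exact Nat.sInf_le (hUN ω)
  -- U n is ℱ n-strongly measurable for n ≤ N
  have hUmeas : ∀ n ≤ N, StronglyMeasurable[ℱ n] (U n) := by
    intro n hn
    rcases eq_or_lt_of_le hn with h | h
    · subst h
      have hUZ : U n = Z n := funext hUN
      rw [hUZ]; exact (hZadapted n).stronglyMeasurable
    · have hmeq : U n = fun ω => max (Z n ω) ((μ[U (n + 1)|ℱ n]) ω) := funext (hUrec n h)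
      rw [hmeq]
      exact ((hZadapted n).max
        (stronglyMeasurable_condExp.measurable)).stronglyMeasurable
  -- U n is integrable for n ≤ N
  have hUintN : ∀ k, Integrable (U (N - k)) μ := by
    intro k
    induction k with
    | zero =>
      have hUZ : U (N - 0) = Z N := by simpa using funext hUN
      rw [hUZ]; exact (hZ2 N).integrable one_le_two
    | succ k ih =>
      by_cases hk : N ≤ k
      · have : N - (k + 1) = N - k := by omega
        rw [this]; exact ih
      · push_neg at hk
        have hlt : N - (k + 1) < N := by omega
        have hmeq : U (N - (k + 1)) =
            fun ω => max (Z (N - (k + 1)) ω) ((μ[U (N - (k + 1) + 1)|ℱ (N - (k + 1))]) ω) :=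
          funext (hUrec _ hlt)
        rw [hmeq]
        have hsup := (((hZ2 (N - (k + 1))).integrable one_le_two).sup
          (integrable_condExp (μ := μ) (f := U (N - (k + 1) + 1)) (m := ℱ (N - (k + 1)))))
        exact hsup
  have hUint : ∀ n ≤ N, Integrable (U n) μ := by
    intro n hn
    have : n = N - (N - n) := by omega
    rw [this]; exact hUintN (N - n)
  -- the stopping time property
  have hst : IsStoppingTime ℱ (fun ω => (τ ω : WithTop ℕ)) := by
    intro n
    simp only [Nat.cast_withTop, WithTop.coe_le_coe]
    by_cases hn : N ≤ n
    · have : {ω | τ ω ≤ n} = Set.univ := by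
        ext ω; simp only [Set.mem_setOf_eq, Set.mem_univ, iff_true]
        exact (hτN ω).trans hn
      rw [this]; exact MeasurableSet.univ
    · push_neg at hn
      have hset : {ω | τ ω ≤ n} = ⋃ k ∈ Finset.range (n + 1), {ω | U k ω = Z k ω} := by
        ext ω
        simp only [Set.mem_setOf_eq, Set.mem_iUnion, Finset.mem_range]
        constructor
        · intro h
          refine ⟨τ ω, by omega, ?_⟩
          have hmem : τ ω ∈ {m | U m ω = Z m ω} := by
            rw [hτ ω]; exact Nat.sInf_mem ⟨N, hUN ω⟩
          exact hmem
        · rintro ⟨k, hk, hmem⟩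
          rw [hτ ω]
          exact le_trans (Nat.sInf_le hmem) (by omega)
      rw [hset]
      refine MeasurableSet.biUnion (Set.to_countable _) fun k hk => ?_
      have hk' : k < n + 1 := Finset.mem_range.mp (Finset.mem_coe.mp hk)
      have hkn : k ≤ n := by omega
      have hkN : k ≤ N := by omega
      exact ℱ.mono hkn _ (((hUmeas k hkN).measurableSet_eq_fun (hZadapted k).stronglyMeasurable))
  refine ⟨hst, hτN, ?_⟩
  -- basic facts about the stopped process
  set V : ℕ → Ω → ℝ := MeasureTheory.stoppedProcess U (fun ω => (τ ω : WithTop ℕ)) with hV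
  have hVapp : ∀ n ω, V n ω = U (min n (τ ω)) ω := fun n ω => by
    rw [hV, stoppedProcess]; simp only [Nat.cast_withTop, ← WithTop.coe_min]; rfl
  -- decomposition of V n as a finite sum of indicators
  have hVdecomp : ∀ n, V n = Set.indicator {a | n ≤ τ a} (U n) +
      ∑ i ∈ Finset.range n, Set.indicator {ω | τ ω = i} (U i) :=
    fun n => by
      rw [hV]
      exact (MeasureTheory.stoppedProcess_eq (u := U) (τ := fun ω => (τ ω : ℕ∞)) n).trans
        (by simp only [Nat.cast_le, Nat.cast_inj])
  -- adaptedness of V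
  have hVadapted : StronglyAdapted ℱ V := by
    intro n
    rw [hVdecomp n]
    refine StronglyMeasurable.add ?_ ?_
    · by_cases hn : n ≤ N
      · exact ((hUmeas n hn).indicator (by simpa using hst.measurableSet_ge n))
      · have hem : {a | n ≤ τ a} = (∅ : Set Ω) := by
          ext ω; simp only [Set.mem_setOf_eq, Set.mem_empty_iff_false, iff_false]
          intro h; exact hn (le_trans h (hτN ω))
        rw [hem, Set.indicator_empty]
        exact stronglyMeasurable_const
    · rw [Finset.sum_fn]
      refine Finset.stronglyMeasurable_fun_sum _ fun i hi => ?_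
      simp only [Finset.mem_range] at hi
      by_cases hiN : i ≤ N
      · exact ((hUmeas i hiN).mono (ℱ.mono hi.le)).indicator
          (ℱ.mono hi.le _ (by simpa using hst.measurableSet_eq i))
      · have hem : {ω | τ ω = i} = (∅ : Set Ω) := by
          ext ω; simp only [Set.mem_setOf_eq, Set.mem_empty_iff_false, iff_false]
          intro h; exact hiN (h ▸ hτN ω)
        rw [hem, Set.indicator_empty]
        exact stronglyMeasurable_const
  -- integrability of V
  have hVint : ∀ n, Integrable (V n) μ := by
    intro n
    rw [hVdecomp n]
    refine Integrable.add ?_ ?_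
    · by_cases hn : n ≤ N
      · exact (hUint n hn).indicator (ℱ.le n _ (by simpa using hst.measurableSet_ge n))
      · have hem : {a | n ≤ τ a} = (∅ : Set Ω) := by
          ext ω; simp only [Set.mem_setOf_eq, Set.mem_empty_iff_false, iff_false]
          intro h; exact hn (le_trans h (hτN ω))
        rw [hem, Set.indicator_empty]
        exact integrable_zero _ _ _
    · refine integrable_finset_sum' _ fun i hi => ?_
      simp only [Finset.mem_range] at hi
      by_cases hiN : i ≤ N
      · exact (hUint i hiN).indicator (ℱ.le i _ (by simpa using hst.measurableSet_eq i))
      · have hem : {ω | τ ω = i} = (∅ : Set Ω) := by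
          ext ω; simp only [Set.mem_setOf_eq, Set.mem_empty_iff_false, iff_false]
          intro h; exact hiN (h ▸ hτN ω)
        rw [hem, Set.indicator_empty]
        exact integrable_zero _ _ _
  -- martingale property via martingale_nat
  refine martingale_nat hVadapted hVint fun n => ?_
  by_cases hn : n < N
  · -- main case : n < N
    set A : Set Ω := {ω | n < τ ω} with hA
    have hAmeas : MeasurableSet[ℱ n] A := by
      have hAc : A = {ω | τ ω ≤ n}ᶜ := by
        ext ω; simp only [hA, Set.mem_setOf_eq, Set.mem_compl_iff, not_le]
      rw [hAc]; exact (show MeasurableSet[ℱ n] {ω | τ ω ≤ n} by simpa using hst n).compl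
    set g : Ω → ℝ := U (n + 1) - U n with hg
    have hgint : Integrable g μ := (hUint (n + 1) hn).sub (hUint n hn.le)
    -- pointwise identity V (n+1) = V n + A.indicator g
    have hkey : V (n + 1) = V n + A.indicator g := by
      funext ω
      simp only [Pi.add_apply, hVapp]
      by_cases h : ω ∈ A
      · have hτω : n < τ ω := h
        have h1 : min (n + 1) (τ ω) = n + 1 := min_eq_left (by omega)
        have h2 : min n (τ ω) = n := min_eq_left (by omega)
        rw [h1, h2, Set.indicator_of_mem h g]
        simp [hg]
      · have hτω : τ ω ≤ n := not_lt.mp h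
        have h1 : min (n + 1) (τ ω) = τ ω := min_eq_right (by omega)
        have h2 : min n (τ ω) = τ ω := min_eq_right hτω
        rw [h1, h2, Set.indicator_of_notMem h g]
        simp
    -- ingredients of the conditional expectation computation
    have h1 : μ[g|ℱ n] =ᵐ[μ] μ[U (n + 1)|ℱ n] - μ[U n|ℱ n] :=
      condExp_sub (hUint (n + 1) hn) (hUint n hn.le) _
    have h2 : μ[U n|ℱ n] = U n :=
      condExp_of_stronglyMeasurable (ℱ.le n) (hUmeas n hn.le) (hUint n hn.le)
    have h3 : μ[A.indicator g|ℱ n] =ᵐ[μ] A.indicator (μ[g|ℱ n]) :=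
      condExp_indicator hgint hAmeas
    have h4 : μ[V (n + 1)|ℱ n] =ᵐ[μ] μ[V n|ℱ n] + μ[A.indicator g|ℱ n] := by
      rw [hkey]
      exact condExp_add (hVint n) (hgint.indicator (ℱ.le n _ hAmeas)) _
    have hcondV : μ[V n|ℱ n] = V n :=
      condExp_of_stronglyMeasurable (ℱ.le n) (hVadapted n) (hVint n)
    refine Filter.EventuallyEq.symm ?_
    filter_upwards [h1, h3, h4] with ω h1ω h3ω h4ω
    -- on A, the conditional expectation of U (n+1) equals U n pointwise
    have h5 : A.indicator (μ[g|ℱ n]) ω = 0 := by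
      by_cases hω : ω ∈ A
      · rw [Set.indicator_of_mem hω, h1ω]
        have hne : U n ω ≠ Z n ω := by
          intro heq
          have hle : τ ω ≤ n := by rw [hτ ω]; exact Nat.sInf_le heq
          exact absurd (show n < τ ω from hω) (not_lt.mpr hle)
        have hrec := hUrec n hn ω
        rcases max_cases (Z n ω) ((μ[U (n + 1)|ℱ n]) ω) with ⟨hm, _⟩ | ⟨hm, _⟩
        · exact absurd (hrec.trans hm) hne
        · simp [Pi.sub_apply, h2, hrec, hm]
      · rw [Set.indicator_of_notMem hω]
    rw [h4ω, Pi.add_apply, hcondV, h3ω, h5, add_zero]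
  · -- trivial case : n ≥ N, the stopped process is constant
    push_neg at hn
    have hVeq : V (n + 1) = V n := by
      funext ω
      simp only [hVapp]
      have h1 : min (n + 1) (τ ω) = τ ω := min_eq_right (by have := hτN ω; omega)
      have h2 : min n (τ ω) = τ ω := min_eq_right (by have := hτN ω; omega)
      rw [h1, h2]
    rw [hVeq, condExp_of_stronglyMeasurable (ℱ.le n) (hVadapted n) (hVint n)]
end

section
/- Let U be the Snell envelope of Z and τ* = inf{n : U_n = Z_n}. Then E[Z_{τ*}] = U_0, i.e. τ* attains the supremum sup_{τ ∈ T_{0,N}} E[Z_τ] = U_0, where T_{0,N} is the set of stopping times with values in {0,...,N}. -/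
open MeasureTheory

/-- The hitting time `τ* = inf{n : U n = Z n}` attains the optimal stopping value:
`E[Z_{τ*}] = E[U_0]` and this is the greatest value of `E[Z_τ]` over all
`{0,...,N}`-valued stopping times. -/
theorem snell_hitting_time_attains_value
    {Ω : Type*} {m0 : MeasurableSpace Ω} {μ : Measure Ω} [IsProbabilityMeasure μ]
    (ℱ : Filtration ℕ m0) (N : ℕ) (Z U : ℕ → Ω → ℝ)
    (hZadapted : Adapted ℱ Z) (hZ2 : ∀ n, MemLp (Z n) 2 μ)
    (hUN : ∀ ω, U N ω = Z N ω)
    (hUrec : ∀ n < N, ∀ ω, U n ω = max (Z n ω) ((μ[U (n + 1) | ℱ n]) ω))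
    (τ : Ω → ℕ) (hτ : ∀ ω, τ ω = sInf {n | U n ω = Z n ω}) :
    (∫ ω, Z (τ ω) ω ∂μ = ∫ ω, U 0 ω ∂μ) ∧
      IsGreatest
        {x : ℝ | ∃ σ : Ω → ℕ, IsStoppingTime ℱ (fun ω => (σ ω : WithTop ℕ)) ∧ (∀ ω, σ ω ≤ N) ∧
          x = ∫ ω, Z (σ ω) ω ∂μ}
        (∫ ω, Z (τ ω) ω ∂μ) := by
  have hiZ : ∀ n, Integrable (Z n) μ := fun n => (hZ2 n).integrable one_le_two
  -- basic properties of U on {0,...,N}, by downward induction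
  have key : ∀ k n, n + k = N →
      StronglyMeasurable[ℱ n] (U n) ∧ Integrable (U n) μ ∧ (∀ ω, Z n ω ≤ U n ω) := by
    intro k
    induction k with
    | zero =>
      intro n hn
      have hnN : n = N := by omega
      subst hnN
      have hUZ : U n = Z n := funext hUN
      rw [hUZ]
      exact ⟨(hZadapted n).stronglyMeasurable, hiZ n, fun ω => le_rfl⟩
    | succ k ih =>
      intro n hn
      have hlt : n < N := by omega
      obtain ⟨hm, hi, _⟩ := ih (n + 1) (by omega)
      have hUeq : U n = fun ω => max (Z n ω) ((μ[U (n + 1) | ℱ n]) ω) :=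
        funext (hUrec n hlt)
      refine ⟨?_, ?_, ?_⟩
      · rw [hUeq]; exact @StronglyMeasurable.sup Ω ℝ (Z n) (μ[U (n+1)|ℱ n]) (ℱ n) _ _ _ (hZadapted n).stronglyMeasurable
          stronglyMeasurable_condExp
      · rw [hUeq]; exact (hiZ n).sup integrable_condExp
      · intro ω; rw [hUeq]; exact le_max_left _ _
  have hmU : ∀ n ≤ N, StronglyMeasurable[ℱ n] (U n) := fun n hn =>
    (key (N - n) n (by omega)).1
  have hiU : ∀ n ≤ N, Integrable (U n) μ := fun n hn => (key (N - n) n (by omega)).2.1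
  have hZU : ∀ n ≤ N, ∀ ω, Z n ω ≤ U n ω := fun n hn => (key (N - n) n (by omega)).2.2
  -- basic properties of τ
  have hτmem : ∀ ω, U (τ ω) ω = Z (τ ω) ω := by
    intro ω
    have : τ ω ∈ {n | U n ω = Z n ω} := by
      rw [hτ ω]; exact Nat.sInf_mem ⟨N, hUN ω⟩
    exact this
  have hτN : ∀ ω, τ ω ≤ N := by
    intro ω; rw [hτ ω]; exact Nat.sInf_le (hUN ω)
  have hτlt : ∀ ω n, n < τ ω → U n ω ≠ Z n ω := by
    intro ω n hn
    rw [hτ ω] at hn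
    exact Nat.notMem_of_lt_sInf hn
  -- τ is a stopping time
  have hτst : IsStoppingTime ℱ (fun ω => (τ ω : WithTop ℕ)) := by
    intro n
    suffices h : MeasurableSet[ℱ n] {ω | τ ω ≤ n} by simpa using h
    have hset : {ω | τ ω ≤ n} = ⋃ k ∈ Finset.range (min n N + 1), {ω | U k ω = Z k ω} := by
      ext ω
      simp only [Set.mem_setOf_eq, Set.mem_iUnion, Finset.mem_range]
      constructor
      · intro h
        exact ⟨τ ω, by have := hτN ω; omega, hτmem ω⟩
      · rintro ⟨k, hk, hkeq⟩
        have : τ ω ≤ k := by rw [hτ ω]; exact Nat.sInf_le hkeq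
        omega
    rw [hset]
    refine MeasurableSet.biUnion (Finset.range (min n N + 1)).countable_toSet ?_
    intro k hk
    have hk' : k ≤ min n N := by
      have hk2 : k ∈ Finset.range (min n N + 1) := hk
      simpa [Nat.lt_succ_iff] using hk2
    have hkN : k ≤ N := hk'.trans (min_le_right n N)
    have hkn : k ≤ n := hk'.trans (min_le_left n N)
    exact ℱ.mono hkn _ <|
      measurableSet_eq_fun ((hmU k hkN).measurable) (hZadapted k)
  -- stopping times are measurable
  have stMeas : ∀ σ : Ω → ℕ, IsStoppingTime ℱ (fun ω => (σ ω : WithTop ℕ)) → Measurable σ := by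
    intro σ hσ
    refine measurable_to_countable' (fun k => ?_)
    have h : MeasurableSet[ℱ k] {ω | σ ω = k} := by simpa using hσ.measurableSet_eq k
    exact ℱ.le k _ h
  -- integrability of stopped values
  have hiStop : ∀ (f : ℕ → Ω → ℝ) (n : ℕ), (∀ k ≤ n, Integrable (f k) μ) →
      ∀ (σ : Ω → ℕ), Measurable σ → Integrable (fun ω => f (min (σ ω) n) ω) μ := by
    intro f n hf σ hσ
    have heq : (fun ω => f (min (σ ω) n) ω) =
        fun ω => ∑ k ∈ Finset.range (n + 1), if min (σ ω) n = k then f k ω else 0 := by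
      funext ω
      rw [Finset.sum_ite_eq (Finset.range (n + 1)) (min (σ ω) n) (fun k => f k ω)]
      simp [Nat.lt_succ_iff]
    rw [heq]
    refine integrable_finset_sum _ (fun k hk => ?_)
    simp only [Finset.mem_range, Nat.lt_succ_iff] at hk
    have hind : (fun ω => if min (σ ω) n = k then f k ω else 0) =
        Set.indicator {ω | min (σ ω) n = k} (f k) := by
      funext ω
      simp [Set.indicator_apply, Set.mem_setOf_eq]
    rw [hind]
    exact (hf k hk).indicator ((hσ.min measurable_const) (measurableSet_singleton k))
  -- one-step computation for any stopping time
  have hstep : ∀ (σ : Ω → ℕ), IsStoppingTime ℱ (fun ω => (σ ω : WithTop ℕ)) → ∀ n, n < N →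
      ∫ ω, U (min (σ ω) (n + 1)) ω ∂μ = (∫ ω, U (min (σ ω) n) ω ∂μ) +
        ((∫ ω in {ω | n < σ ω}, (μ[U (n + 1) | ℱ n]) ω ∂μ) -
          ∫ ω in {ω | n < σ ω}, U n ω ∂μ) := by
    intro σ hσ n hn
    have hσm : Measurable σ := stMeas σ hσ
    have hsF : MeasurableSet[ℱ n] {ω | n < σ ω} := by
      simpa using hσ.measurableSet_gt n
    have hsm0 : MeasurableSet {ω | n < σ ω} := ℱ.le n _ hsF
    have hdecomp : (fun ω => U (min (σ ω) (n + 1)) ω) =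
        (fun ω => U (min (σ ω) n) ω) +
          Set.indicator {ω | n < σ ω} (fun ω => U (n + 1) ω - U n ω) := by
      funext ω
      simp only [Pi.add_apply, Set.indicator_apply, Set.mem_setOf_eq]
      by_cases h : n < σ ω
      · have h1 : min (σ ω) (n + 1) = n + 1 := min_eq_right (by omega)
        have h2 : min (σ ω) n = n := min_eq_right (by omega)
        rw [h1, h2, if_pos h]; ring
      · have h1 : min (σ ω) (n + 1) = σ ω := min_eq_left (by omega)
        have h2 : min (σ ω) n = σ ω := min_eq_left (by omega)
        rw [h1, h2, if_neg h]; ring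
    have hiInd : Integrable (Set.indicator {ω | n < σ ω}
        (fun ω => U (n + 1) ω - U n ω)) μ :=
      ((hiU (n + 1) hn).sub (hiU n hn.le)).indicator hsm0
    have hi1 : Integrable (fun ω => U (min (σ ω) n) ω) μ :=
      hiStop U n (fun k hk => hiU k (by omega)) σ hσm
    rw [hdecomp, integral_add' hi1 hiInd]
    congr 1
    rw [integral_indicator hsm0,
      integral_sub ((hiU (n + 1) hn).integrableOn) ((hiU n hn.le).integrableOn),
      setIntegral_condExp (ℱ.le n) (hiU (n + 1) hn) hsF]
  -- telescoping inequality for any stopping time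
  have tele_le : ∀ (σ : Ω → ℕ), IsStoppingTime ℱ (fun ω => (σ ω : WithTop ℕ)) → ∀ n ≤ N,
      ∫ ω, U (min (σ ω) n) ω ∂μ ≤ ∫ ω, U 0 ω ∂μ := by
    intro σ hσ n
    induction n with
    | zero => intro _; simp
    | succ n ih =>
      intro hn
      have hlt : n < N := by omega
      have h1 := hstep σ hσ n hlt
      have h2 : (∫ ω in {ω | n < σ ω}, (μ[U (n + 1) | ℱ n]) ω ∂μ) ≤
          ∫ ω in {ω | n < σ ω}, U n ω ∂μ := by
        refine setIntegral_mono integrable_condExp.integrableOn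
          ((hiU n hlt.le).integrableOn) (fun ω => ?_)
        rw [hUrec n hlt ω]
        exact le_max_right _ _
      have h3 := ih (by omega)
      linarith
  -- telescoping equality for τ
  have tele_eq : ∀ n ≤ N, ∫ ω, U (min (τ ω) n) ω ∂μ = ∫ ω, U 0 ω ∂μ := by
    intro n
    induction n with
    | zero => intro _; simp
    | succ n ih =>
      intro hn
      have hlt : n < N := by omega
      have h1 := hstep τ hτst n hlt
      have h2 : (∫ ω in {ω | n < τ ω}, (μ[U (n + 1) | ℱ n]) ω ∂μ) =
          ∫ ω in {ω | n < τ ω}, U n ω ∂μ := by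
        refine setIntegral_congr_fun (stMeas τ hτst measurableSet_Ioi) (fun ω hω => ?_)
        have hne : U n ω ≠ Z n ω := hτlt ω n hω
        have hmax := hUrec n hlt ω
        rcases le_or_gt ((μ[U (n + 1) | ℱ n]) ω) (Z n ω) with h | h
        · exact absurd (by rw [hmax, max_eq_left h]) hne
        · rw [hmax, max_eq_right h.le]
      have h3 := ih (by omega)
      rw [h1, h2, h3]
      ring
  -- conclusion
  have hZτ : (fun ω => Z (τ ω) ω) = fun ω => U (min (τ ω) N) ω := by
    funext ω
    rw [min_eq_left (hτN ω), hτmem ω]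
  have hmain : ∫ ω, Z (τ ω) ω ∂μ = ∫ ω, U 0 ω ∂μ := by
    rw [hZτ]
    exact tele_eq N le_rfl
  refine ⟨hmain, ⟨τ, hτst, hτN, rfl⟩, ?_⟩
  rintro x ⟨σ, hσst, hσN, rfl⟩
  rw [hmain]
  have hσm : Measurable σ := stMeas σ hσst
  have hZσ : (fun ω => Z (σ ω) ω) = fun ω => Z (min (σ ω) N) ω := by
    funext ω; rw [min_eq_left (hσN ω)]
  have h1 : ∫ ω, Z (σ ω) ω ∂μ ≤ ∫ ω, U (min (σ ω) N) ω ∂μ := by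
    rw [hZσ]
    refine integral_mono (hiStop Z N (fun k _ => hiZ k) σ hσm)
      (hiStop U N (fun k hk => hiU k hk) σ hσm) (fun ω => ?_)
    exact hZU (min (σ ω) N) (min_le_right _ _) ω
  exact h1.trans (tele_le σ hσst N le_rfl)
end

section
/- Strong duality at the Doob-Meyer martingale: let U be the Snell envelope of Z with Doob decomposition U_n = U_0 + M*_n - A*_n, where M* is a martingale with M*_0 = 0 and A* is predictable, nondecreasing, with A*_0 = 0. Then max_{0≤j≤N} (Z_j - M*_j) = U_0 almost surely, and consequently U_0 = E[max_{0≤j≤N} (Z_j - M*_j)]. -/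
open MeasureTheory

/-- Strong duality at the Doob–Meyer martingale: with `U` the Snell envelope of `Z` and
`U = U 0 + M - A` its Doob decomposition, `max_{0 ≤ j ≤ N} (Z j - M j) = U 0` a.s., and
consequently `E[U 0] = E[max_{0 ≤ j ≤ N} (Z j - M j)]`. -/
theorem strong_duality_doob_martingale
    {Ω : Type*} {m0 : MeasurableSpace Ω} {μ : Measure Ω} [IsProbabilityMeasure μ]
    (ℱ : Filtration ℕ m0) (N : ℕ) (Z U M A : ℕ → Ω → ℝ)
    (hZadapted : StronglyAdapted ℱ Z) (hZ2 : ∀ n, MemLp (Z n) 2 μ)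
    (hUN : ∀ ω, U N ω = Z N ω)
    (hUrec : ∀ n < N, ∀ ω, U n ω = max (Z n ω) ((μ[U (n + 1) | ℱ n]) ω))
    (hM : Martingale M ℱ μ) (hM0 : ∀ ω, M 0 ω = 0) (hA0 : ∀ ω, A 0 ω = 0)
    (hApred : ∀ n, StronglyMeasurable[ℱ n] (A (n + 1)))
    (hAmono : ∀ n, ∀ᵐ ω ∂μ, A n ω ≤ A (n + 1) ω)
    (hMinc : ∀ n, (fun ω => M (n + 1) ω - M n ω)
      =ᵐ[μ] fun ω => U (n + 1) ω - (μ[U (n + 1) | ℱ n]) ω)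
    (hDoob : ∀ n, ∀ᵐ ω ∂μ, U n ω = U 0 ω + M n ω - A n ω) :
    (∀ᵐ ω ∂μ, (Finset.range (N + 1)).sup' Finset.nonempty_range_add_one
        (fun j => Z j ω - M j ω) = U 0 ω) ∧
      ∫ ω, U 0 ω ∂μ = ∫ ω, (Finset.range (N + 1)).sup' Finset.nonempty_range_add_one
        (fun j => Z j ω - M j ω) ∂μ := by
  have hae : ∀ᵐ ω ∂μ, (∀ n, U n ω = U 0 ω + M n ω - A n ω) ∧
      (∀ n, M (n + 1) ω - M n ω = U (n + 1) ω - (μ[U (n + 1) | ℱ n]) ω) ∧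
      (∀ n, A n ω ≤ A (n + 1) ω) :=
    (ae_all_iff.2 hDoob).and ((ae_all_iff.2 hMinc).and (ae_all_iff.2 hAmono))
  have key : ∀ᵐ ω ∂μ, (Finset.range (N + 1)).sup' Finset.nonempty_range_add_one
      (fun j => Z j ω - M j ω) = U 0 ω := by
    filter_upwards [hae] with ω h
    obtain ⟨hD, hMi, hAm⟩ := h
    have hAnn : ∀ n, 0 ≤ A n ω := by
      intro n; induction n with
      | zero => simp [hA0]
      | succ n ih => exact ih.trans (hAm n)
    have hdiff : ∀ n, A (n + 1) ω - A n ω = U n ω - (μ[U (n + 1) | ℱ n]) ω := by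
      intro n
      have h1 := hD n; have h2 := hD (n + 1); have h3 := hMi n; linarith
    have hZleU : ∀ j ≤ N, Z j ω ≤ U j ω := by
      intro j hj
      rcases eq_or_lt_of_le hj with h | h
      · subst h; rw [hUN]
      · rw [hUrec j h]; exact le_max_left _ _
    refine le_antisymm (Finset.sup'_le _ _ ?_) ?_
    · intro j hj
      have hj' : j ≤ N := Nat.lt_succ_iff.mp (Finset.mem_range.mp hj)
      have h1 := hZleU j hj'
      have h2 := hD j
      have h3 := hAnn j
      linarith
    · have hex : ∃ n, U n ω = Z n ω := ⟨N, hUN ω⟩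
      set k := Nat.find hex with hk
      have hkN : k ≤ N := Nat.find_le (hUN ω)
      have hAk : ∀ n, n ≤ k → A n ω = 0 := by
        intro n
        induction n with
        | zero => intro _; exact hA0 ω
        | succ n ih =>
          intro hn
          have hnk : n < k := hn
          have hne : ¬ U n ω = Z n ω := Nat.find_min hex hnk
          have hnN : n < N := lt_of_lt_of_le hnk hkN
          have hmax := hUrec n hnN ω
          have hUE : U n ω = (μ[U (n + 1) | ℱ n]) ω := by
            rcases max_choice (Z n ω) ((μ[U (n + 1) | ℱ n]) ω) with h | h
            · exact absurd (hmax.trans h) hne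
            · exact hmax.trans h
          have h1 := hdiff n
          have h2 := ih (le_of_lt hnk)
          linarith
      have hUkZ : U k ω = Z k ω := Nat.find_spec hex
      have heq : Z k ω - M k ω = U 0 ω := by
        have h1 := hD k; have h2 := hAk k le_rfl; linarith
      calc U 0 ω = Z k ω - M k ω := heq.symm
        _ ≤ _ := Finset.le_sup' (fun j => Z j ω - M j ω)
          (Finset.mem_range.mpr (Nat.lt_succ_of_le hkN))
  exact ⟨key, integral_congr_ae (key.mono fun ω h => h.symm)⟩
end

section
/- Proposition (random-time policy from an approximate dual martingale): let M̂ be any F-martingale, let Û be defined by Û_N = Z_N, Û_n = max(Z_n, Û_{n+1} + (M̂_n - M̂_{n+1})), and let τ = inf{n ≥ 0 : Û_n = Z_n}. Then Z_τ - M̂_τ = max_{0≤n≤N} (Z_n - M̂_n) almost surely, and E[Z_τ - M̂_τ] = E[max_{0≤n≤N} (Z_n - M̂_n)] ≥ U_0, where U_0 = sup_{τ' ∈ T_{0,N}} E[Z_{τ'}] is the optimal stopping value. -/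
open MeasureTheory

private lemma integrable_finset_sup' {Ω : Type*} {m0 : MeasurableSpace Ω} {μ : Measure Ω}
    {ι : Type*} {s : Finset ι} (hs : s.Nonempty) (f : ι → Ω → ℝ)
    (hf : ∀ i ∈ s, Integrable (f i) μ) :
    Integrable (fun ω => s.sup' hs fun i => f i ω) μ := by
  induction hs using Finset.Nonempty.cons_induction with
  | singleton a =>
      have : (fun ω => ({a} : Finset ι).sup' ⟨a, by simp⟩ fun i => f i ω) = f a := by
        funext ω; simp [Finset.sup'_singleton]
      rw [this]; exact hf a (by simp)
  | cons a s ha hs ih =>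
      simp only [Finset.sup'_cons hs]
      exact (hf a (by simp)).sup (ih fun i hi => hf i (by simp [hi]))

/-- Random-time policy from an approximate dual martingale: for any martingale `M̂`,
with `Û` built by the pathwise backward recursion and `τ` the first time `Û` hits `Z`,
one has `Z τ - M̂ τ = max_{0 ≤ n ≤ N} (Z n - M̂ n)` a.s., and
`E[Z τ - M̂ τ] = E[max_{0 ≤ n ≤ N} (Z n - M̂ n)] ≥ sup_{τ'} E[Z τ']`. -/
theorem random_time_policy_from_dual_martingale
    {Ω : Type*} {m0 : MeasurableSpace Ω} {μ : Measure Ω} [IsProbabilityMeasure μ]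
    (ℱ : Filtration ℕ m0) (N : ℕ) (Z M U : ℕ → Ω → ℝ)
    (hZadapted : Adapted ℱ Z) (hZ2 : ∀ n, MemLp (Z n) 2 μ)
    (hM : Martingale M ℱ μ) (hM2 : ∀ n, MemLp (M n) 2 μ) (hM0 : ∀ ω, M 0 ω = 0)
    (hUN : ∀ ω, U N ω = Z N ω)
    (hUrec : ∀ n < N, ∀ ω, U n ω = max (Z n ω) (U (n + 1) ω + (M n ω - M (n + 1) ω)))
    (τ : Ω → ℕ) (hτ : ∀ ω, τ ω = sInf {n | U n ω = Z n ω}) :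
    (∀ᵐ ω ∂μ, Z (τ ω) ω - M (τ ω) ω
        = (Finset.range (N + 1)).sup' Finset.nonempty_range_add_one
            (fun n => Z n ω - M n ω)) ∧
    (∫ ω, (Z (τ ω) ω - M (τ ω) ω) ∂μ
        = ∫ ω, (Finset.range (N + 1)).sup' Finset.nonempty_range_add_one
            (fun n => Z n ω - M n ω) ∂μ) ∧
    sSup {x : ℝ | ∃ σ : Ω → ℕ, IsStoppingTime ℱ (fun ω => (σ ω : WithTop ℕ)) ∧ (∀ ω, σ ω ≤ N) ∧
        x = ∫ ω, Z (σ ω) ω ∂μ}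
      ≤ ∫ ω, (Finset.range (N + 1)).sup' Finset.nonempty_range_add_one
          (fun n => Z n ω - M n ω) ∂μ := by
  -- pointwise key identity
  have key : ∀ ω, Z (τ ω) ω - M (τ ω) ω
      = (Finset.range (N + 1)).sup' Finset.nonempty_range_add_one (fun n => Z n ω - M n ω) := by
    intro ω
    -- backward induction: U n - M n = max over [n, N]
    have hsup : ∀ d n, ∀ hn : n + d = N,
        U n ω - M n ω = (Finset.Icc n N).sup'
          ⟨N, Finset.mem_Icc.mpr ⟨by omega, le_rfl⟩⟩ (fun k => Z k ω - M k ω) := by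
      intro d
      induction d with
      | zero =>
          intro n hn
          have : n = N := by omega
          subst this
          simp [hUN ω]
      | succ d ih =>
          intro n hn
          have hnN : n < N := by omega
          have h1 := ih (n + 1) (by omega)
          have hins : Finset.Icc n N = insert n (Finset.Icc (n + 1) N) := by
            ext k; simp [Finset.mem_Icc]; omega
          rw [hUrec n hnN ω]
          have e1 : U (n + 1) ω + (M n ω - M (n + 1) ω) - M n ω
              = U (n + 1) ω - M (n + 1) ω := by ring
          have hmax := (max_sub_sub_right (Z n ω)
            (U (n + 1) ω + (M n ω - M (n + 1) ω)) (M n ω)).symm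
          rw [e1] at hmax
          rw [hmax, h1]
          exact ((Finset.sup'_congr _ hins (fun _ _ => rfl)).trans (Finset.sup'_insert _ (fun k => Z k ω - M k ω))).symm
    have hne : {n | U n ω = Z n ω}.Nonempty := ⟨N, hUN ω⟩
    have hτmem : U (τ ω) ω = Z (τ ω) ω := by
      have := Nat.sInf_mem hne
      rwa [← hτ ω] at this
    have hτle : τ ω ≤ N := by
      rw [hτ ω]; exact Nat.sInf_le (hUN ω)
    -- for n ≤ τ ω, U n - M n is constant
    have hconst : ∀ n, n ≤ τ ω → U 0 ω - M 0 ω = U n ω - M n ω := by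
      intro n
      induction n with
      | zero => intro _; rfl
      | succ n ih =>
          intro hn
          have hnτ : n < τ ω := by omega
          have hnset : U n ω ≠ Z n ω := by
            intro h
            have : τ ω ≤ n := by rw [hτ ω]; exact Nat.sInf_le h
            omega
          have hnN : n < N := by omega
          have hrec := hUrec n hnN ω
          have hU : U n ω = U (n + 1) ω + (M n ω - M (n + 1) ω) := by
            rcases max_choice (Z n ω) (U (n + 1) ω + (M n ω - M (n + 1) ω)) with h | h
            · exact absurd (hrec.trans h) hnset
            · exact hrec.trans h
          rw [ih (by omega), hU]; ring
    have h0 : U 0 ω - M 0 ω = Z (τ ω) ω - M (τ ω) ω := by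
      rw [hconst (τ ω) le_rfl, hτmem]
    have hIcc : Finset.Icc 0 N = Finset.range (N + 1) := by
      ext k; simp [Nat.lt_succ_iff]
    have := hsup N 0 (by omega)
    rw [h0] at this
    rw [this]; exact Finset.sup'_congr _ hIcc (fun _ _ => rfl)
  refine ⟨Filter.Eventually.of_forall key, integral_congr_ae (Filter.Eventually.of_forall key), ?_⟩
  -- weak duality
  have hZint : ∀ n, Integrable (Z n) μ := fun n => (hZ2 n).integrable one_le_two
  have hsupInt : Integrable (fun ω => (Finset.range (N + 1)).sup' Finset.nonempty_range_add_one
      (fun n => Z n ω - M n ω)) μ :=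
    integrable_finset_sup' _ _ (fun n _ => (hZint n).sub (hM.integrable n))
  refine csSup_le ⟨∫ ω, Z 0 ω ∂μ,
    ⟨fun _ => 0, isStoppingTime_const ℱ 0, fun _ => Nat.zero_le N, rfl⟩⟩ ?_
  rintro x ⟨σ, hσ, hσN, rfl⟩
  have hZσ : Integrable (fun ω => Z (σ ω) ω) μ :=
    integrable_stoppedValue ℕ hσ hZint (fun ω => WithTop.coe_le_coe.mpr (hσN ω))
  have hMσ : Integrable (stoppedValue M (fun ω => (σ ω : WithTop ℕ))) μ :=
    integrable_stoppedValue ℕ hσ hM.integrable (fun ω => WithTop.coe_le_coe.mpr (hσN ω))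
  have h0σ : (fun _ : Ω => ((0 : ℕ) : WithTop ℕ)) ≤ (fun ω => (σ ω : WithTop ℕ)) := fun _ => WithTop.coe_le_coe.mpr (Nat.zero_le _)
  have hzeroStop : IsStoppingTime ℱ (fun _ : Ω => ((0 : ℕ) : WithTop ℕ)) := isStoppingTime_const ℱ 0
  have hSV0 : ∀ (f : ℕ → Ω → ℝ), stoppedValue f (fun _ : Ω => ((0 : ℕ) : WithTop ℕ)) = f 0 := fun f => rfl
  have hEM0 : ∫ ω, stoppedValue M (fun _ : Ω => ((0 : ℕ) : WithTop ℕ)) ω ∂μ = 0 := by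
    rw [hSV0]
    simp [funext hM0]
  have hEMσ : ∫ ω, stoppedValue M (fun ω => (σ ω : WithTop ℕ)) ω ∂μ = 0 := by
    have h1 := hM.submartingale.expected_stoppedValue_mono hzeroStop hσ h0σ (fun ω => WithTop.coe_le_coe.mpr (hσN ω))
    have h2 := hM.neg.submartingale.expected_stoppedValue_mono hzeroStop hσ h0σ (fun ω => WithTop.coe_le_coe.mpr (hσN ω))
    have hneg1 : stoppedValue (-M) (fun ω => (σ ω : WithTop ℕ)) = -(stoppedValue M (fun ω => (σ ω : WithTop ℕ))) := rfl
    have hneg0 : stoppedValue (-M) (fun _ : Ω => ((0 : ℕ) : WithTop ℕ)) = -(stoppedValue M (fun _ : Ω => ((0 : ℕ) : WithTop ℕ))) := rfl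
    rw [hneg1, hneg0] at h2
    simp only [Pi.neg_apply, integral_neg, neg_le_neg_iff] at h2
    rw [hEM0] at h1 h2
    exact le_antisymm h2 h1
  have hMσ' : (fun ω => M (σ ω) ω) = stoppedValue M (fun ω => (σ ω : WithTop ℕ)) := rfl
  have hstep : ∫ ω, Z (σ ω) ω ∂μ
      = ∫ ω, (Z (σ ω) ω - M (σ ω) ω) ∂μ := by
    rw [integral_sub hZσ (by rw [hMσ']; exact hMσ)]
    rw [show (∫ ω, M (σ ω) ω ∂μ) = ∫ ω, stoppedValue M (fun ω => (σ ω : WithTop ℕ)) ω ∂μ from rfl, hEMσ, sub_zero]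
  rw [hstep]
  refine integral_mono (hZσ.sub (by rw [hMσ']; exact hMσ)) hsupInt (fun ω => ?_)
  exact Finset.le_sup' (fun n => Z n ω - M n ω) (Finset.mem_range.mpr (Nat.lt_succ_of_le (hσN ω)))
end

section
/- Pathwise maximum attained at τ implies strict dominance before τ: in the setting of the random-time proposition, for every n < τ one has Û_n - M̂_n = Û_{n+1} - M̂_{n+1} and Z_n - M̂_n < Û_n - M̂_n; that is, the maximum of p ↦ Z_p - M̂_p over {0,...,N} is first attained exactly at time τ = inf{n : Û_n = Z_n}. -/
/-- Before the first hitting time `τ = inf{n : Û n = Z n}`, the process `Û - M̂` is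
constant and strictly dominates `Z - M̂`: the maximum of `p ↦ Z p - M̂ p` is first
attained exactly at `τ`. -/
theorem strict_dominance_before_hitting_time
    (N : ℕ) (Z M U : ℕ → ℝ)
    (hUN : U N = Z N)
    (hUrec : ∀ n < N, U n = max (Z n) (U (n + 1) + (M n - M (n + 1))))
    (τ : ℕ) (hτ : τ = sInf {n | U n = Z n}) :
    ∀ n < τ, U n - M n = U (n + 1) - M (n + 1) ∧ Z n - M n < U n - M n := by
  intro n hn
  have hτN : τ ≤ N := hτ ▸ Nat.sInf_le hUN
  have hne : U n ≠ Z n := fun h => absurd (hτ ▸ Nat.sInf_le h) (not_le.mpr hn)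
  have hrec := hUrec n (lt_of_lt_of_le hn hτN)
  rcases max_cases (Z n) (U (n + 1) + (M n - M (n + 1))) with ⟨h1, h2⟩ | ⟨h1, h2⟩
  · exact absurd (hrec.trans h1) hne
  constructor
  · rw [hrec, h1]; ring
  · have : Z n < U n := by rw [hrec, h1]; exact h2
    linarith
end

section
/- If the approximate martingale is the true Doob martingale, the random-time policy recovers the optimal stopping time: with M̂ = M* (the martingale part of the Doob decomposition of the Snell envelope U), the process Û defined by Û_N = Z_N, Û_n = max(Z_n, Û_{n+1} + (M*_n - M*_{n+1})) equals U almost surely, and τ̂_0 = inf{n : Û_n = Z_n} equals τ* = inf{n : U_n = Z_n} almost surely. -/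
open MeasureTheory

/-- If the approximate martingale is the true Doob martingale `M` of the Snell envelope
`U`, then the pathwise backward recursion `Û` coincides with `U` a.s., and the random
time `τ̂₀ = inf{n : Û n = Z n}` coincides with `τ* = inf{n : U n = Z n}` a.s. -/
theorem random_time_policy_recovers_optimal_time
    {Ω : Type*} {m0 : MeasurableSpace Ω} {μ : Measure Ω} [IsProbabilityMeasure μ]
    (ℱ : Filtration ℕ m0) (N : ℕ) (Z U M A Uhat : ℕ → Ω → ℝ)
    (hZadapted : StronglyAdapted ℱ Z) (hZ2 : ∀ n, MemLp (Z n) 2 μ)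
    (hUN : ∀ ω, U N ω = Z N ω)
    (hUrec : ∀ n < N, ∀ ω, U n ω = max (Z n ω) ((μ[U (n + 1) | ℱ n]) ω))
    (hM : Martingale M ℱ μ) (hM0 : ∀ ω, M 0 ω = 0) (hA0 : ∀ ω, A 0 ω = 0)
    (hApred : ∀ n, StronglyMeasurable[ℱ n] (A (n + 1)))
    (hAmono : ∀ n, ∀ᵐ ω ∂μ, A n ω ≤ A (n + 1) ω)
    (hMinc : ∀ n, (fun ω => M (n + 1) ω - M n ω)
      =ᵐ[μ] fun ω => U (n + 1) ω - (μ[U (n + 1) | ℱ n]) ω)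
    (hDoob : ∀ n, ∀ᵐ ω ∂μ, U n ω = U 0 ω + M n ω - A n ω)
    (hUhatN : ∀ ω, Uhat N ω = Z N ω)
    (hUhatrec : ∀ n < N, ∀ ω,
      Uhat n ω = max (Z n ω) (Uhat (n + 1) ω + (M n ω - M (n + 1) ω))) :
    (∀ n ≤ N, ∀ᵐ ω ∂μ, Uhat n ω = U n ω) ∧
      ∀ᵐ ω ∂μ, sInf {n | Uhat n ω = Z n ω} = sInf {n | U n ω = Z n ω} := by
  have key : ∀ d : ℕ, ∀ᵐ ω ∂μ, Uhat (N - d) ω = U (N - d) ω := by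
    intro d
    induction d with
    | zero =>
      filter_upwards with ω
      simp only [Nat.sub_zero, hUhatN, hUN]
    | succ d ih =>
      rcases le_or_gt N d with hNd | hNd
      · have h1 : N - (d + 1) = N - d := by omega
        rw [h1]; exact ih
      · set n := N - (d + 1) with hn
        have hn1 : n + 1 = N - d := by omega
        have hnN : n < N := by omega
        rw [← hn1] at ih
        filter_upwards [ih, hMinc n] with ω h1 h2
        have h2' : M (n + 1) ω - M n ω = U (n + 1) ω - (μ[U (n + 1) | ℱ n]) ω := h2
        rw [hUhatrec n hnN ω, hUrec n hnN ω, h1]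
        congr 1
        linarith
  have part1 : ∀ n ≤ N, ∀ᵐ ω ∂μ, Uhat n ω = U n ω := by
    intro n hn
    have := key (N - n)
    rwa [Nat.sub_sub_self hn] at this
  refine ⟨part1, ?_⟩
  have hall : ∀ᵐ ω ∂μ, ∀ n, n ≤ N → Uhat n ω = U n ω := by
    rw [ae_all_iff]
    intro n
    by_cases hn : n ≤ N
    · filter_upwards [part1 n hn] with ω h _; exact h
    · filter_upwards with ω h; exact absurd h hn
  filter_upwards [hall] with ω hω
  have hNin1 : N ∈ {n | Uhat n ω = Z n ω} := hUhatN ω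
  have hNin2 : N ∈ {n | U n ω = Z n ω} := hUN ω
  apply le_antisymm
  · have hk := Nat.sInf_mem ⟨N, hNin2⟩
    have hkN : sInf {n | U n ω = Z n ω} ≤ N := Nat.sInf_le hNin2
    exact Nat.sInf_le (by rw [Set.mem_setOf_eq, hω _ hkN]; exact hk)
  · have hk := Nat.sInf_mem ⟨N, hNin1⟩
    have hkN : sInf {n | Uhat n ω = Z n ω} ≤ N := Nat.sInf_le hNin1
    exact Nat.sInf_le (by rw [Set.mem_setOf_eq, ← hω _ hkN]; exact hk)
end

section
/- Telescoping rewrite of the dual objective: for any square-integrable martingale M with M_0 = 0 and increments ΔM_i = M_i - M_{i-1}, E[max_{0≤j≤N} (Z_j - M_j)] = E[Z_N] + Σ_{n=0}^{N-1} E[(Z_n + ΔM_{n+1} - max_{n+1≤j≤N} {Z_j - Σ_{i=n+2}^{j} ΔM_i})_+], where x_+ = max(x,0). -/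
open MeasureTheory


private lemma sup_Icc_step (Z D : ℕ → ℝ) (N n : ℕ) (h : n < N) :
    (Finset.Icc n N).sup' (Finset.nonempty_Icc.mpr h.le)
        (fun j => Z j - ∑ i ∈ Finset.Icc (n + 1) j, D i)
      = max (Z n)
          ((Finset.Icc (n + 1) N).sup' (Finset.nonempty_Icc.mpr h)
              (fun j => Z j - ∑ i ∈ Finset.Icc (n + 2) j, D i) - D (n + 1)) := by
  have hset : Finset.Icc n N = insert n (Finset.Icc (n + 1) N) := by
    ext x; simp only [Finset.mem_Icc, Finset.mem_insert]; omega
  rw [Finset.sup'_congr (Finset.nonempty_Icc.mpr h.le) hset (fun x _ => rfl),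
    Finset.sup'_insert (Finset.nonempty_Icc.mpr h)]
  have : (Finset.Icc (n + 1) N).sup' (Finset.nonempty_Icc.mpr h)
        (fun j => Z j - ∑ i ∈ Finset.Icc (n + 2) j, D i) - D (n + 1)
      = (Finset.Icc (n + 1) N).sup' (Finset.nonempty_Icc.mpr h)
        (fun j => Z j - ∑ i ∈ Finset.Icc (n + 1) j, D i) := by
    rw [Finset.comp_sup'_eq_sup'_comp (Finset.nonempty_Icc.mpr h) (fun x => x - D (n + 1))
      (fun x y => (max_sub_sub_right x y _).symm)]
    refine Finset.sup'_congr _ rfl (fun j hj => ?_)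
    simp only [Finset.mem_Icc] at hj
    have hins : Finset.Icc (n + 1) j = insert (n + 1) (Finset.Icc (n + 2) j) := by
      ext x; simp only [Finset.mem_Icc, Finset.mem_insert]; omega
    rw [hins, Finset.sum_insert (by simp [Finset.mem_Icc])]
    simp only [Function.comp]
    ring
  rw [this]
  simp [Finset.Icc_self, Nat.succ_eq_add_one]

private lemma max_add_aux (a b : ℝ) : max a b = b + max (a - b) 0 := by
  rcases le_total a b with h | h
  · rw [max_eq_right h, max_eq_right (sub_nonpos.2 h), add_zero]
  · rw [max_eq_left h, max_eq_left (sub_nonneg.2 h)]; ring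

private lemma sup_Icc_telescope (Z D : ℕ → ℝ) (N m : ℕ) :
    ∀ n (h : n + m = N),
    (Finset.Icc n N).sup' (Finset.nonempty_Icc.mpr (by omega))
        (fun j => Z j - ∑ i ∈ Finset.Icc (n + 1) j, D i)
      = Z N + ∑ k ∈ Finset.Ico n N,
          (max (Z k + D (k + 1)
              - (insert (k + 1) (Finset.Icc (k + 1) N)).sup'
                  (Finset.insert_nonempty _ _)
                  (fun j => Z j - ∑ i ∈ Finset.Icc (k + 2) j, D i)) 0
            - D (k + 1)) := by
  induction m with
  | zero =>
    intro n h
    have hn : n = N := by omega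
    subst hn
    rw [Finset.sup'_congr (Finset.nonempty_Icc.mpr (by omega)) (Finset.Icc_self n)
      (fun x _ => rfl), Finset.sup'_singleton]
    simp
  | succ m ih =>
    intro n h
    have hlt : n < N := by omega
    rw [sup_Icc_step Z D N n hlt]
    have hins : insert (n + 1) (Finset.Icc (n + 1) N) = Finset.Icc (n + 1) N :=
      Finset.insert_eq_self.mpr (Finset.mem_Icc.mpr ⟨le_refl _, hlt⟩)
    set S := (Finset.Icc (n + 1) N).sup' (Finset.nonempty_Icc.mpr hlt)
        (fun j => Z j - ∑ i ∈ Finset.Icc (n + 2) j, D i) with hS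
    have hSins : (insert (n + 1) (Finset.Icc (n + 1) N)).sup'
        (Finset.insert_nonempty _ _)
        (fun j => Z j - ∑ i ∈ Finset.Icc (n + 2) j, D i) = S :=
      Finset.sup'_congr _ hins (fun x _ => rfl)
    have hih := ih (n + 1) (by omega)
    simp only [show n + 1 + 1 = n + 2 from rfl] at hih
    rw [← hS] at hih
    rw [Finset.sum_eq_sum_Ico_succ_bot hlt, hSins, max_add_aux,
      show Z n - (S - D (n + 1)) = Z n + D (n + 1) - S from by ring, hih]
    ring

section helper
variable {Ω : Type*} {m0 : MeasurableSpace Ω} {μ : Measure Ω}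

private lemma integrable_sup'' (s : Finset ℕ) (hs : s.Nonempty) (f : ℕ → Ω → ℝ)
    (hf : ∀ i ∈ s, Integrable (f i) μ) :
    Integrable (fun ω => s.sup' hs (fun i => f i ω)) μ := by
  induction hs using Finset.Nonempty.cons_induction with
  | singleton a => simpa using hf a (by simp)
  | cons a s ha hs ih =>
    simp only [Finset.sup'_cons hs]
    exact (hf a (by simp)).sup (ih (fun i hi => hf i (by simp [hi])))

end helper

/-- Telescoping rewrite of the dual objective: for any square-integrable martingale `M`
with `M 0 = 0`,
`E[max_{0≤j≤N}(Z j - M j)] = E[Z N] + Σ_{n=0}^{N-1} E[(Z n + ΔM (n+1) - max_{n+1≤j≤N}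
{Z j - Σ_{i=n+2}^j ΔM i})₊]`.  (For `n < N` the index set `insert (n+1) (Icc (n+1) N)`
equals `Icc (n+1) N`; the `insert` only provides nonemptiness.) -/
theorem telescoping_dual_objective
    {Ω : Type*} {m0 : MeasurableSpace Ω} {μ : Measure Ω} [IsProbabilityMeasure μ]
    (ℱ : Filtration ℕ m0) (N : ℕ) (hN : 1 ≤ N) (Z M : ℕ → Ω → ℝ)
    (hZadapted : Adapted ℱ Z) (hZ2 : ∀ n, MemLp (Z n) 2 μ)
    (hM : Martingale M ℱ μ) (hM2 : ∀ n, MemLp (M n) 2 μ) (hM0 : ∀ ω, M 0 ω = 0) :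
    ∫ ω, (Finset.range (N + 1)).sup' Finset.nonempty_range_add_one
        (fun j => Z j ω - M j ω) ∂μ
      = (∫ ω, Z N ω ∂μ) + ∑ n ∈ Finset.range N,
          ∫ ω, max (Z n ω + (M (n + 1) ω - M n ω)
            - (insert (n + 1) (Finset.Icc (n + 1) N)).sup'
                (Finset.insert_nonempty _ _)
                (fun j => Z j ω - ∑ i ∈ Finset.Icc (n + 2) j, (M i ω - M (i - 1) ω)))
            0 ∂μ := by
  have hZint : ∀ n, Integrable (Z n) μ := fun n => (hZ2 n).integrable one_le_two
  have hMint : ∀ n, Integrable (M n) μ := fun n => (hM2 n).integrable one_le_two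
  -- increments sum to M j
  have hMsum : ∀ (j : ℕ) (ω : Ω), ∑ i ∈ Finset.Icc 1 j, (M i ω - M (i - 1) ω) = M j ω := by
    intro j ω
    induction j with
    | zero => simp [hM0]
    | succ j ihj =>
      rw [Finset.sum_Icc_succ_top (by omega), ihj]
      simp
  -- abbreviation for the positive-part integrand
  set P : ℕ → Ω → ℝ := fun n ω => max (Z n ω + (M (n + 1) ω - M n ω)
      - (insert (n + 1) (Finset.Icc (n + 1) N)).sup'
          (Finset.insert_nonempty _ _)
          (fun j => Z j ω - ∑ i ∈ Finset.Icc (n + 2) j, (M i ω - M (i - 1) ω))) 0 with hP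
  -- pathwise telescoping identity
  have hpath : ∀ ω, (Finset.range (N + 1)).sup' Finset.nonempty_range_add_one
      (fun j => Z j ω - M j ω)
      = Z N ω + ∑ k ∈ Finset.range N, (P k ω - (M (k + 1) ω - M k ω)) := by
    intro ω
    have ht := sup_Icc_telescope (fun j => Z j ω)
      (fun i => M i ω - M (i - 1) ω) N N 0 (by omega)
    simp only [Nat.add_sub_cancel, Nat.zero_add] at ht
    rw [Finset.sup'_congr Finset.nonempty_range_add_one
      (by ext x; simp [Nat.lt_succ_iff] : Finset.range (N + 1) = Finset.Icc 0 N)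
      (fun j _ => by rw [← hMsum j ω]), ht, ← Finset.range_eq_Ico]
  rw [integral_congr_ae (Filter.Eventually.of_forall hpath)]
  -- integrability of P n
  have hPint : ∀ n, Integrable (P n) μ := by
    intro n
    have hSint : Integrable (fun ω => (insert (n + 1) (Finset.Icc (n + 1) N)).sup'
        (Finset.insert_nonempty _ _)
        (fun j => Z j ω - ∑ i ∈ Finset.Icc (n + 2) j, (M i ω - M (i - 1) ω))) μ :=
      integrable_sup'' _ _ _ (fun j _ => (hZint j).sub
        (integrable_finset_sum _ (fun i _ => (hMint i).sub (hMint (i - 1)))))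
    exact (((hZint n).add ((hMint (n + 1)).sub (hMint n))).sub hSint).pos_part
  have hDint : ∀ k : ℕ, Integrable (fun ω => M (k + 1) ω - M k ω) μ :=
    fun k => (hMint (k + 1)).sub (hMint k)
  have hDzero : ∀ k : ℕ, ∫ ω, (M (k + 1) ω - M k ω) ∂μ = 0 := by
    intro k
    rw [integral_sub (hMint _) (hMint _), sub_eq_zero,
      ← integral_condExp (ℱ.le k) (f := M (k + 1))]
    exact integral_congr_ae (hM.condExp_ae_eq (Nat.le_succ k))
  rw [integral_add (hZint N)
      (integrable_finset_sum (μ := μ) (f := fun k a => P k a - (M (k + 1) a - M k a)) _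
        (fun k _ => (hPint k).sub (hDint k))),
    integral_finset_sum (μ := μ) (f := fun k a => P k a - (M (k + 1) a - M k a)) _
      (fun k _ => (hPint k).sub (hDint k))]
  congr 1
  refine Finset.sum_congr rfl (fun k _ => ?_)
  rw [integral_sub (hPint k) (hDint k), hDzero k, sub_zero]
end

section
/- Backward characterization of the Doob martingale increment: fix n ∈ {0,...,N-1} and suppose ΔM_i = ΔM*_i for i ≥ n+2. Then ΔM*_{n+1} is the unique minimizer over Y ∈ H²_{n+1} := {Y ∈ L²: Y is F_{n+1}-measurable and E[Y|F_n] = 0} of E[(Z_n + Y - max_{n+1≤j≤N} {Z_j - Σ_{i=n+2}^j ΔM*_i})²], and the minimizer is given by the conditional-centering projection: Y = E[V | F_{n+1}] - E[V | F_n] where V = max_{n+1≤j≤N} {Z_j - Σ_{i=n+2}^j ΔM*_i}. -/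
open MeasureTheory

lemma memLp_two_condexp' {Ω : Type*} {m m0 : MeasurableSpace Ω} {μ : Measure Ω}
    [IsFiniteMeasure μ] (hm : m ≤ m0) {f : Ω → ℝ} (hf : MemLp f 2 μ) :
    MemLp (μ[f|m]) 2 μ := by
  have hfi : Integrable f μ := hf.integrable one_le_two
  have hgmem : MemLp ((condExpL2 ℝ ℝ hm (hf.toLp f) : Lp ℝ 2 μ) : Ω → ℝ) 2 μ := Lp.memLp _
  refine hgmem.ae_eq (ae_eq_condExp_of_forall_setIntegral_eq hm hfi
    (fun s _ _ => (hgmem.integrable one_le_two).integrableOn)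
    (fun s hs hμs => ?_) (aestronglyMeasurable_condExpL2 hm _))
  rw [integral_condExpL2_eq hm (hf.toLp f) hs hμs.ne]
  exact setIntegral_congr_ae (hm s hs) ((hf.coeFn_toLp).mono fun x hx _ => hx)

lemma telescopeM (M : ℕ → ℝ) (n : ℕ) : ∀ j, n + 1 ≤ j →
    ∑ i ∈ Finset.Icc (n + 2) j, (M i - M (i - 1)) = M j - M (n + 1) := by
  intro j hj
  induction j, hj using Nat.le_induction with
  | base => rw [Finset.Icc_eq_empty (by omega), Finset.sum_empty, sub_self]
  | succ j hj ih =>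
      rw [Finset.sum_Icc_succ_top (by omega), ih]
      simp only [Nat.add_sub_cancel]
      ring

lemma sup'_base (Z M : ℕ → ℝ) (N : ℕ) :
    (insert N (Finset.Icc N N)).sup' (Finset.insert_nonempty _ _)
      (fun j => Z j - (M j - M N)) = Z N := by
  rw [Finset.sup'_congr (Finset.insert_nonempty _ _)
    (show insert N (Finset.Icc N N) = {N} by rw [Finset.Icc_self]; simp)
    (fun x _ => rfl), Finset.sup'_singleton]
  ring

lemma sup'_step (Z M : ℕ → ℝ) (k N : ℕ) (hk : k < N) :
    (insert k (Finset.Icc k N)).sup' (Finset.insert_nonempty _ _)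
      (fun j => Z j - (M j - M k))
    = max (Z k) ((insert (k+1) (Finset.Icc (k+1) N)).sup' (Finset.insert_nonempty _ _)
      (fun j => Z j - (M j - M (k+1))) - (M (k+1) - M k)) := by
  have hne : (Finset.Icc (k+1) N).Nonempty := Finset.nonempty_Icc.mpr (by omega)
  have h1 : insert k (Finset.Icc k N) = insert k (Finset.Icc (k+1) N) := by
    ext x; simp only [Finset.mem_insert, Finset.mem_Icc]; omega
  have h2 : insert (k+1) (Finset.Icc (k+1) N) = Finset.Icc (k+1) N :=
    Finset.insert_eq_self.mpr (Finset.mem_Icc.mpr ⟨le_rfl, by omega⟩)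
  rw [Finset.sup'_congr (Finset.insert_nonempty _ _) h1 (fun x _ => rfl),
    Finset.sup'_insert hne,
    Finset.sup'_congr (Finset.insert_nonempty _ _) h2 (fun x _ => rfl)]
  have h3 : (Finset.Icc (k+1) N).sup' hne (fun j => Z j - (M j - M k))
      = (Finset.Icc (k+1) N).sup' hne (fun j => Z j - (M j - M (k+1))) - (M (k+1) - M k) := by
    have h4 : ∀ x y : ℝ, (fun x => x - (M (k+1) - M k)) (x ⊔ y)
        = (fun x => x - (M (k+1) - M k)) x ⊔ (fun x => x - (M (k+1) - M k)) y := by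
      intro x y; simp only; rw [max_sub_sub_right]
    have h5 := Finset.comp_sup'_eq_sup'_comp hne
      (f := fun j => Z j - (M j - M (k+1))) (fun x => x - (M (k+1) - M k)) h4
    simp only [Function.comp] at h5
    rw [h5]
    exact Finset.sup'_congr hne rfl (fun j _ => by ring)
  rw [h3]
  simp only [sub_self, sub_zero]

/-- Backward characterization of the Doob martingale increment. -/
theorem doob_increment_backward_characterization
    {Ω : Type*} {m0 : MeasurableSpace Ω} {μ : Measure Ω} [IsProbabilityMeasure μ]
    (ℱ : Filtration ℕ m0) (N : ℕ) (Z U Mstar A : ℕ → Ω → ℝ)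
    (hZadapted : StronglyAdapted ℱ Z) (hZ2 : ∀ n, MemLp (Z n) 2 μ)
    (hUN : ∀ ω, U N ω = Z N ω)
    (hUrec : ∀ n < N, ∀ ω, U n ω = max (Z n ω) ((μ[U (n + 1) | ℱ n]) ω))
    (hMstar : Martingale Mstar ℱ μ) (hMstar0 : ∀ ω, Mstar 0 ω = 0)
    (hA0 : ∀ ω, A 0 ω = 0)
    (hApred : ∀ n, StronglyMeasurable[ℱ n] (A (n + 1)))
    (hAmono : ∀ n, ∀ᵐ ω ∂μ, A n ω ≤ A (n + 1) ω)
    (hMinc : ∀ n, (fun ω => Mstar (n + 1) ω - Mstar n ω)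
      =ᵐ[μ] fun ω => U (n + 1) ω - (μ[U (n + 1) | ℱ n]) ω)
    (hDoob : ∀ n, ∀ᵐ ω ∂μ, U n ω = U 0 ω + Mstar n ω - A n ω)
    (n : ℕ) (hn : n < N)
    (V : Ω → ℝ)
    (hV : ∀ ω, V ω = (insert (n + 1) (Finset.Icc (n + 1) N)).sup'
        (Finset.insert_nonempty _ _)
        (fun j => Z j ω - ∑ i ∈ Finset.Icc (n + 2) j, (Mstar i ω - Mstar (i - 1) ω))) :
    (∀ Y : Ω → ℝ, MemLp Y 2 μ → StronglyMeasurable[ℱ (n + 1)] Y →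
        μ[Y | ℱ n] =ᵐ[μ] 0 →
        ∫ ω, (Z n ω + (Mstar (n + 1) ω - Mstar n ω) - V ω) ^ 2 ∂μ
          ≤ ∫ ω, (Z n ω + Y ω - V ω) ^ 2 ∂μ) ∧
    (∀ Y : Ω → ℝ, MemLp Y 2 μ → StronglyMeasurable[ℱ (n + 1)] Y →
        μ[Y | ℱ n] =ᵐ[μ] 0 →
        ∫ ω, (Z n ω + Y ω - V ω) ^ 2 ∂μ
            = ∫ ω, (Z n ω + (Mstar (n + 1) ω - Mstar n ω) - V ω) ^ 2 ∂μ →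
        Y =ᵐ[μ] fun ω => Mstar (n + 1) ω - Mstar n ω) ∧
    (fun ω => Mstar (n + 1) ω - Mstar n ω)
      =ᵐ[μ] fun ω => (μ[V | ℱ (n + 1)]) ω - (μ[V | ℱ n]) ω := by
  classical
  -- MemLp of the Snell envelope
  have hU2 : ∀ d k, k + d = N → MemLp (U k) 2 μ := by
    intro d
    induction d with
    | zero =>
        intro k hk
        have hkN : k = N := by omega
        subst hkN
        have hUZ : U k = Z k := funext hUN
        rw [hUZ]; exact hZ2 k
    | succ d ih =>
        intro k hk
        have hkN : k < N := by omega
        have hrec : U k = Z k ⊔ μ[U (k + 1)|ℱ k] := by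
          funext ω
          rw [Pi.sup_apply]
          exact hUrec k hkN ω
        have h2 : MemLp (μ[U (k + 1)|ℱ k]) 2 μ := memLp_two_condexp' (ℱ.le k) (ih (k + 1) (by omega))
        rw [hrec]
        exact (hZ2 k).sup h2
  have hu2 : MemLp (U (n + 1)) 2 μ := hU2 (N - (n + 1)) (n + 1) (by omega)
  have hu_int : Integrable (U (n + 1)) μ := hu2.integrable one_le_two
  have hu_meas : StronglyMeasurable[ℱ (n + 1)] (U (n + 1)) := by
    rcases eq_or_lt_of_le (Nat.succ_le_of_lt hn) with h | h
    · have hUZ : U (n + 1) = Z (n + 1) := by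
        funext ω
        rw [show n + 1 = N from h]
        exact hUN ω
      rw [hUZ]; exact hZadapted (n + 1)
    · have hrec : U (n + 1) = fun ω => max (Z (n + 1) ω) ((μ[U (n + 2)|ℱ (n + 1)]) ω) :=
        funext (hUrec (n + 1) h)
      rw [hrec]
      exact continuous_max.comp_stronglyMeasurable
        ((hZadapted (n + 1)).prodMk stronglyMeasurable_condExp)
  have he2 : MemLp (μ[U (n + 1)|ℱ n]) 2 μ := memLp_two_condexp' (ℱ.le n) hu2
  have he_int : Integrable (μ[U (n + 1)|ℱ n]) μ := integrable_condExp
  -- V equals U (n+1) a.e.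
  have hVW : ∀ ω, V ω = (insert (n + 1) (Finset.Icc (n + 1) N)).sup'
      (Finset.insert_nonempty _ _)
      (fun j => Z j ω - (Mstar j ω - Mstar (n + 1) ω)) := by
    intro ω
    rw [hV ω]
    refine Finset.sup'_congr _ rfl ?_
    intro j hj
    have hj' : n + 1 ≤ j := by
      simp only [Finset.mem_insert, Finset.mem_Icc] at hj
      omega
    rw [telescopeM (fun i => Mstar i ω) n j hj']
  have hWU : ∀ d k, k + d = N →
      (fun ω => (insert k (Finset.Icc k N)).sup' (Finset.insert_nonempty _ _)
        (fun j => Z j ω - (Mstar j ω - Mstar k ω))) =ᵐ[μ] U k := by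
    intro d
    induction d with
    | zero =>
        intro k hk
        have hkN : k = N := by omega
        subst hkN
        refine Filter.Eventually.of_forall fun ω => ?_
        exact (sup'_base (fun j => Z j ω) (fun j => Mstar j ω) k).trans (hUN ω).symm
    | succ d ih =>
        intro k hk
        have hkN : k < N := by omega
        filter_upwards [ih (k + 1) (by omega), hMinc k] with ω h1 h2
        have h2' : Mstar (k + 1) ω - Mstar k ω = U (k + 1) ω - (μ[U (k + 1)|ℱ k]) ω := h2
        show (insert k (Finset.Icc k N)).sup' (Finset.insert_nonempty _ _)
          (fun j => Z j ω - (Mstar j ω - Mstar k ω)) = U k ω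
        rw [sup'_step (fun j => Z j ω) (fun j => Mstar j ω) k N hkN]
        rw [show ((insert (k + 1) (Finset.Icc (k + 1) N)).sup' (Finset.insert_nonempty _ _)
          (fun j => Z j ω - (Mstar j ω - Mstar (k + 1) ω))) = U (k + 1) ω from h1]
        rw [h2', hUrec k hkN ω, sub_sub_cancel]
  have hVU : V =ᵐ[μ] U (n + 1) := by
    have := hWU (N - (n + 1)) (n + 1) (by omega)
    filter_upwards [this] with ω h
    rw [hVW ω]
    exact h
  -- conditional expectations of V
  have hKe1 : μ[V|ℱ (n + 1)] =ᵐ[μ] U (n + 1) := by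
    refine (condExp_congr_ae hVU).trans ?_
    rw [condExp_of_stronglyMeasurable (ℱ.le (n + 1)) hu_meas hu_int]
  have hKe0 : μ[V|ℱ n] =ᵐ[μ] μ[U (n + 1)|ℱ n] := condExp_congr_ae hVU
  have hthird : (fun ω => Mstar (n + 1) ω - Mstar n ω)
      =ᵐ[μ] fun ω => (μ[V|ℱ (n + 1)]) ω - (μ[V|ℱ n]) ω := by
    filter_upwards [hMinc n, hKe1, hKe0] with ω h1 h2 h3
    simp only [h2, h3]
    exact h1
  -- orthogonality
  have horth : ∀ D : Ω → ℝ, MemLp D 2 μ → μ[D|ℱ n] =ᵐ[μ] 0 →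
      ∫ ω, (Z n ω - (μ[U (n + 1)|ℱ n]) ω) * D ω ∂μ = 0 := by
    intro D hD2 hDc
    set G : Ω → ℝ := fun ω => Z n ω - (μ[U (n + 1)|ℱ n]) ω with hG_def
    have hG2 : MemLp G 2 μ := (hZ2 n).sub he2
    have hGm : StronglyMeasurable[ℱ n] G := (hZadapted n).sub stronglyMeasurable_condExp
    have hDi : Integrable D μ := hD2.integrable one_le_two
    have hGD : Integrable (G * D) μ := by
      have := (hD2.smul (φ := G) hG2 (p := 2) (q := 2) (r := 1) (hpqr := ⟨by norm_num [ENNReal.inv_two_add_inv_two]⟩))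
      rw [memLp_one_iff_integrable] at this
      exact this.congr (Filter.Eventually.of_forall fun ω => rfl)
    have h1 : ∫ ω, G ω * D ω ∂μ = ∫ ω, (μ[G * D|ℱ n]) ω ∂μ := (integral_condExp (ℱ.le n)).symm
    rw [h1]
    have h2 : μ[G * D|ℱ n] =ᵐ[μ] 0 := by
      refine (condExp_mul_of_stronglyMeasurable_left hGm hGD hDi).trans ?_
      filter_upwards [hDc] with ω h
      simp only [Pi.mul_apply, Pi.zero_apply]
      rw [show (μ[D|ℱ n]) ω = 0 from h, mul_zero]
    rw [integral_congr_ae h2]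
    simp
  -- expansion of the objective
  have hexp : ∀ Y : Ω → ℝ, MemLp Y 2 μ → μ[Y|ℱ n] =ᵐ[μ] 0 →
      ∫ ω, (Z n ω + Y ω - V ω) ^ 2 ∂μ
        = (∫ ω, (Z n ω - (μ[U (n + 1)|ℱ n]) ω) ^ 2 ∂μ)
          + ∫ ω, (Y ω - (U (n + 1) ω - (μ[U (n + 1)|ℱ n]) ω)) ^ 2 ∂μ := by
    intro Y hY2 hYc
    have hYi : Integrable Y μ := hY2.integrable one_le_two
    set G : Ω → ℝ := fun ω => Z n ω - (μ[U (n + 1)|ℱ n]) ω with hG_def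
    set D : Ω → ℝ := fun ω => Y ω - (U (n + 1) ω - (μ[U (n + 1)|ℱ n]) ω) with hD_def
    have hG2 : MemLp G 2 μ := (hZ2 n).sub he2
    have hD2 : MemLp D 2 μ := hY2.sub (hu2.sub he2)
    have hDc : μ[D|ℱ n] =ᵐ[μ] 0 := by
      have hsub : μ[fun ω => Y ω - (U (n + 1) ω - (μ[U (n + 1)|ℱ n]) ω)|ℱ n]
          =ᵐ[μ] μ[Y|ℱ n] - μ[fun ω => U (n + 1) ω - (μ[U (n + 1)|ℱ n]) ω|ℱ n] := by
        have := condExp_sub (m := ℱ n) (μ := μ) hYi (hu_int.sub he_int)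
        exact this
      have hsub2 : μ[fun ω => U (n + 1) ω - (μ[U (n + 1)|ℱ n]) ω|ℱ n]
          =ᵐ[μ] μ[U (n + 1)|ℱ n] - μ[μ[U (n + 1)|ℱ n]|ℱ n] := by
        have := condExp_sub (m := ℱ n) (μ := μ) hu_int he_int
        exact this
      have hee : μ[μ[U (n + 1)|ℱ n]|ℱ n] = μ[U (n + 1)|ℱ n] :=
        condExp_of_stronglyMeasurable (ℱ.le n) stronglyMeasurable_condExp he_int
      filter_upwards [hsub, hsub2, hYc] with ω h1 h2 h3
      simp only [Pi.sub_apply, Pi.zero_apply] at h1 h2 h3 ⊢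
      rw [hD_def]
      rw [h1, h2, hee, h3]
      ring
    have hGD : Integrable (fun ω => G ω * D ω) μ := by
      have := (hD2.smul (φ := G) hG2 (p := 2) (q := 2) (r := 1) (hpqr := ⟨by norm_num [ENNReal.inv_two_add_inv_two]⟩))
      rw [memLp_one_iff_integrable] at this
      exact this.congr (Filter.Eventually.of_forall fun ω => rfl)
    have h1 : (fun ω => (Z n ω + Y ω - V ω) ^ 2)
        =ᵐ[μ] fun ω => G ω ^ 2 + (2 * (G ω * D ω) + D ω ^ 2) := by
      filter_upwards [hVU] with ω h
      rw [h, hG_def, hD_def]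
      ring
    have hi1 : Integrable (fun ω => G ω ^ 2) μ := hG2.integrable_sq
    have hi2 : Integrable (fun ω => 2 * (G ω * D ω)) μ := hGD.const_mul 2
    have hi3 : Integrable (fun ω => D ω ^ 2) μ := hD2.integrable_sq
    have hi23 : Integrable (fun ω => 2 * (G ω * D ω) + D ω ^ 2) μ := hi2.add hi3
    rw [integral_congr_ae h1, integral_add hi1 hi23, integral_add hi2 hi3,
      integral_const_mul 2, horth D hD2 hDc]
    ring
  -- rewrite of the candidate objective
  have hstar : ∫ ω, (Z n ω + (Mstar (n + 1) ω - Mstar n ω) - V ω) ^ 2 ∂μ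
      = ∫ ω, (Z n ω - (μ[U (n + 1)|ℱ n]) ω) ^ 2 ∂μ := by
    refine integral_congr_ae ?_
    filter_upwards [hVU, hMinc n] with ω h1 h2
    have h2' : Mstar (n + 1) ω - Mstar n ω = U (n + 1) ω - (μ[U (n + 1)|ℱ n]) ω := h2
    rw [h1, h2']
    ring
  refine ⟨?_, ?_, hthird⟩
  · intro Y hY2 hYm hYc
    rw [hstar, hexp Y hY2 hYc]
    have hpos : 0 ≤ ∫ ω, (Y ω - (U (n + 1) ω - (μ[U (n + 1)|ℱ n]) ω)) ^ 2 ∂μ :=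
      integral_nonneg fun ω => sq_nonneg _
    linarith
  · intro Y hY2 hYm hYc heq
    rw [hstar, hexp Y hY2 hYc] at heq
    have hD2 : MemLp (fun ω => Y ω - (U (n + 1) ω - (μ[U (n + 1)|ℱ n]) ω)) 2 μ :=
      hY2.sub (hu2.sub he2)
    have hzero : ∫ ω, (Y ω - (U (n + 1) ω - (μ[U (n + 1)|ℱ n]) ω)) ^ 2 ∂μ = 0 := by
      linarith
    have hae : (fun ω => (Y ω - (U (n + 1) ω - (μ[U (n + 1)|ℱ n]) ω)) ^ 2) =ᵐ[μ] 0 :=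
      (integral_eq_zero_iff_of_nonneg (fun ω => sq_nonneg _) hD2.integrable_sq).mp hzero
    filter_upwards [hae, hMinc n] with ω h1 h2
    have h2' : Mstar (n + 1) ω - Mstar n ω = U (n + 1) ω - (μ[U (n + 1)|ℱ n]) ω := h2
    have h1' : (Y ω - (U (n + 1) ω - (μ[U (n + 1)|ℱ n]) ω)) ^ 2 = 0 := h1
    have h0 : Y ω - (U (n + 1) ω - (μ[U (n + 1)|ℱ n]) ω) = 0 := by
      exact (pow_eq_zero_iff two_ne_zero).mp h1'
    show Y ω = Mstar (n + 1) ω - Mstar n ω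
    rw [h2']
    linarith
end

section
/- Zero-variance property of the optimal control variate: with τ* the optimal stopping time and M* the Doob martingale of the Snell envelope, the random variable Z_{τ*} - M*_{τ*} is almost surely constant equal to U_0; in particular Var(Z_{τ*} - M*_{τ*}) = 0 and E[Z_{τ*} - λ M*_{τ*}] = U_0 for λ = 1. -/
open MeasureTheory ProbabilityTheory

lemma variance_eq_zero_of_ae_const {Ω : Type*} {m0 : MeasurableSpace Ω} {μ : Measure Ω}
    [IsProbabilityMeasure μ] {X : Ω → ℝ} {c : ℝ} (h : ∀ᵐ ω ∂μ, X ω = c) :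
    variance X μ = 0 := by
  have hint : μ[X] = c := by
    rw [integral_congr_ae (g := fun _ => c) h]
    simp
  have : evariance X μ = 0 := by
    rw [evariance, ← lintegral_zero (μ := μ)]
    refine lintegral_congr_ae ?_
    filter_upwards [h] with ω hω
    simp [hω, hint]
  rw [variance, this]
  simp

/-- Zero-variance property of the optimal control variate: with `τ*` the optimal
stopping time and `M` the Doob martingale of the Snell envelope `U` (with `U 0`
deterministic, equal to `u0`), the random variable `Z τ* - M τ*` is a.s. constant
equal to `u0`; in particular its variance vanishes and `E[Z τ* - 1 • M τ*] = u0`. -/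
theorem zero_variance_optimal_control_variate
    {Ω : Type*} {m0 : MeasurableSpace Ω} {μ : Measure Ω} [IsProbabilityMeasure μ]
    (ℱ : Filtration ℕ m0) (N : ℕ) (Z U M A : ℕ → Ω → ℝ)
    (hZadapted : Adapted ℱ Z) (hZ2 : ∀ n, MemLp (Z n) 2 μ)
    (hUN : ∀ ω, U N ω = Z N ω)
    (hUrec : ∀ n < N, ∀ ω, U n ω = max (Z n ω) ((μ[U (n + 1) | ℱ n]) ω))
    (hM : Martingale M ℱ μ) (hM0 : ∀ ω, M 0 ω = 0) (hA0 : ∀ ω, A 0 ω = 0)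
    (hApred : ∀ n, StronglyMeasurable[ℱ n] (A (n + 1)))
    (hAmono : ∀ n, ∀ᵐ ω ∂μ, A n ω ≤ A (n + 1) ω)
    (hMinc : ∀ n, (fun ω => M (n + 1) ω - M n ω)
      =ᵐ[μ] fun ω => U (n + 1) ω - (μ[U (n + 1) | ℱ n]) ω)
    (hDoob : ∀ n, ∀ᵐ ω ∂μ, U n ω = U 0 ω + M n ω - A n ω)
    (u0 : ℝ) (hu0 : ∀ᵐ ω ∂μ, U 0 ω = u0)
    (τ : Ω → ℕ) (hτ : ∀ ω, τ ω = sInf {n | U n ω = Z n ω}) :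
    (∀ᵐ ω ∂μ, Z (τ ω) ω - M (τ ω) ω = u0) ∧
      variance (fun ω => Z (τ ω) ω - M (τ ω) ω) μ = 0 ∧
      ∫ ω, (Z (τ ω) ω - (1 : ℝ) * M (τ ω) ω) ∂μ = u0 := by
  have key : ∀ᵐ ω ∂μ, Z (τ ω) ω - M (τ ω) ω = u0 := by
    have hD : ∀ᵐ ω ∂μ, ∀ n, U n ω = U 0 ω + M n ω - A n ω := ae_all_iff.2 hDoob
    have hMm : ∀ᵐ ω ∂μ, ∀ n, M (n + 1) ω - M n ω
        = U (n + 1) ω - (μ[U (n + 1) | ℱ n]) ω := ae_all_iff.2 hMinc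
    filter_upwards [hD, hMm, hu0] with ω hDω hMω hu0ω
    set S : Set ℕ := {n | U n ω = Z n ω} with hS
    have hNS : N ∈ S := hUN ω
    have hτle : τ ω ≤ N := by rw [hτ]; exact Nat.sInf_le hNS
    have hmem : U (τ ω) ω = Z (τ ω) ω := by
      rw [hτ]; exact Nat.sInf_mem ⟨N, hNS⟩
    have hA : ∀ k, k ≤ τ ω → A k ω = 0 := by
      intro k
      induction k with
      | zero => intro _; exact hA0 ω
      | succ k ih =>
        intro hk
        have hklt : k < τ ω := Nat.lt_of_succ_le hk
        have hkS : k ∉ S := by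
          rw [hτ] at hklt
          exact Nat.notMem_of_lt_sInf hklt
        have hkN : k < N := lt_of_lt_of_le hklt hτle
        have hUk : U k ω = (μ[U (k + 1) | ℱ k]) ω := by
          rcases max_choice (Z k ω) ((μ[U (k + 1) | ℱ k]) ω) with h | h
          · exact absurd ((hUrec k hkN ω).trans h) hkS
          · exact (hUrec k hkN ω).trans h
        have h1 := hDω k
        have h2 := hDω (k + 1)
        have h3 := hMω k
        have h4 := ih (le_of_lt hklt)
        linarith
    have hAτ : A (τ ω) ω = 0 := hA (τ ω) le_rfl
    have := hDω (τ ω)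
    linarith [hmem]
  refine ⟨key, variance_eq_zero_of_ae_const key, ?_⟩
  have : ∫ ω, (Z (τ ω) ω - (1 : ℝ) * M (τ ω) ω) ∂μ = ∫ _ω, u0 ∂μ := by
    refine integral_congr_ae ?_
    filter_upwards [key] with ω hω
    simpa using hω
  rw [this, integral_const]; simp
end
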